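/- arXiv:1312.4935 — 2 statements merged into one kernel-verified Lean document; each statement's English description precedes it below -/
import Mathlib

section
/- Maximality of the standard interval rank: Let P be a finite bounded poset of height h, and let r₁, r₂ : P → ℕ be strictly antitone functions with r₁(a) ≤ r₂(a) ≤ h − 1 for all a. Then for every a ∈ P, r₁(a) ≥ height(↑a) − 1 and r₂(a) ≤ h − height(↓a); that is, [r₁(a), r₂(a)] ⊆ R⁺(a). -/
/-- The height of a subset `S` of a poset: the maximum number of elements
of a chain contained in `S`. -/
noncomputable def pheight {P : Type*} [PartialOrder P] (S : Set P) : ℕ :=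
  sSup {n | ∃ c : Finset P, ↑c ⊆ S ∧ IsChain (· ≤ ·) (c : Set P) ∧ c.card = n}

lemma chain_injOn {P : Type*} [PartialOrder P] {f : P → ℕ} (hf : StrictAnti f)
    {c : Finset P} (hc : IsChain (· ≤ ·) (c : Set P)) : Set.InjOn f ↑c := by
  intro x hx y hy hxy
  by_contra hne
  rcases hc hx hy hne with h | h
  · exact absurd hxy (ne_of_gt (hf (lt_of_le_of_ne h hne)))
  · exact absurd hxy (ne_of_lt (hf (lt_of_le_of_ne h (Ne.symm hne))))

/-- Maximality of the standard interval rank: any strictly antitone pair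
r₁ ≤ r₂ ≤ h − 1 satisfies [r₁ a, r₂ a] ⊆ R⁺(a). -/
theorem standard_rank_maximal {P : Type*} [Fintype P] [PartialOrder P]
    [BoundedOrder P] [Nontrivial P] (r₁ r₂ : P → ℕ)
    (h₁ : StrictAnti r₁) (h₂ : StrictAnti r₂)
    (hwd : ∀ a, r₁ a ≤ r₂ a) (hbd : ∀ a, r₂ a ≤ pheight (Set.univ : Set P) - 1) :
    ∀ a : P, (pheight (Set.Ici a) : ℤ) - 1 ≤ r₁ a ∧
      (r₂ a : ℤ) ≤ (pheight (Set.univ : Set P) : ℤ) - pheight (Set.Iic a) := by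
  have hbdd : ∀ S : Set P, BddAbove {n | ∃ c : Finset P, ↑c ⊆ S ∧
      IsChain (· ≤ ·) (c : Set P) ∧ c.card = n} := by
    intro S
    refine ⟨Fintype.card P, ?_⟩
    rintro n ⟨c, -, -, rfl⟩
    exact Finset.card_le_univ c
  have hne : ∀ S : Set P, (0 : ℕ) ∈ {n | ∃ c : Finset P, ↑c ⊆ S ∧
      IsChain (· ≤ ·) (c : Set P) ∧ c.card = n} := by
    intro S
    exact ⟨∅, by simp, by simp, by simp⟩
  set h := pheight (Set.univ : Set P) with hh
  have hone : 1 ≤ h := by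
    refine le_csSup (hbdd _) ⟨{⊥}, by simp, by simp, by simp⟩
  intro a
  constructor
  · -- first part
    have key : pheight (Set.Ici a) ≤ r₁ a + 1 := by
      refine csSup_le ⟨0, hne _⟩ ?_
      rintro n ⟨c, hsub, hch, rfl⟩
      have hinj := chain_injOn h₁ hch
      have : c.card = (c.image r₁).card := (Finset.card_image_of_injOn hinj).symm
      rw [this]
      have himg : c.image r₁ ⊆ Finset.Iic (r₁ a) := by
        intro m hm
        simp only [Finset.mem_image] at hm
        obtain ⟨x, hx, rfl⟩ := hm
        exact Finset.mem_Iic.mpr (h₁.antitone (hsub hx))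
      calc (c.image r₁).card ≤ (Finset.Iic (r₁ a)).card := Finset.card_le_card himg
        _ = r₁ a + 1 := Nat.card_Iic _
    have : (pheight (Set.Ici a) : ℤ) ≤ (r₁ a : ℤ) + 1 := by exact_mod_cast key
    linarith
  · -- second part
    have key : pheight (Set.Iic a) ≤ h - r₂ a := by
      refine csSup_le ⟨0, hne _⟩ ?_
      rintro n ⟨c, hsub, hch, rfl⟩
      have hinj := chain_injOn h₂ hch
      have hcard : c.card = (c.image r₂).card := (Finset.card_image_of_injOn hinj).symm
      rw [hcard]
      have himg : c.image r₂ ⊆ Finset.Icc (r₂ a) (h - 1) := by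
        intro m hm
        simp only [Finset.mem_image] at hm
        obtain ⟨x, hx, rfl⟩ := hm
        exact Finset.mem_Icc.mpr ⟨h₂.antitone (hsub hx), hbd x⟩
      have := Finset.card_le_card himg
      rw [Nat.card_Icc] at this
      omega
    have h2 : r₂ a ≤ h - 1 := hbd a
    have : pheight (Set.Iic a) + r₂ a ≤ h := by omega
    have := this
    push_cast at this ⊢
    omega
end

section
/- In a finite bounded poset P with |P| ≥ 2, the standard interval rank width is bounded: for every a ∈ P, 0 ≤ W(a) ≤ max(0, height(P) − 3). -/
section aux

variable {P : Type*} [Fintype P] [PartialOrder P]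

lemma pheight_bdd (S : Set P) :
    BddAbove {n | ∃ c : Finset P, ↑c ⊆ S ∧ IsChain (· ≤ ·) (c : Set P) ∧ c.card = n} := by
  classical
  refine ⟨Fintype.card P, ?_⟩
  rintro n ⟨c, -, -, rfl⟩
  exact Finset.card_le_univ c

lemma le_pheight {S : Set P} {c : Finset P} (hc : ↑c ⊆ S)
    (hch : IsChain (· ≤ ·) (c : Set P)) : c.card ≤ pheight S :=
  le_csSup (pheight_bdd S) ⟨c, hc, hch, rfl⟩

lemma pheight_spec (S : Set P) :
    ∃ c : Finset P, ↑c ⊆ S ∧ IsChain (· ≤ ·) (c : Set P) ∧ c.card = pheight S := by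
  classical
  have h0 : (0 : ℕ) ∈ {n | ∃ c : Finset P, ↑c ⊆ S ∧ IsChain (· ≤ ·) (c : Set P) ∧ c.card = n} :=
    ⟨∅, by simp, by simp, by simp⟩
  exact Nat.sSup_mem ⟨0, h0⟩ (pheight_bdd S)

lemma pheight_singleton (x : P) : pheight ({x} : Set P) = 1 := by
  classical
  refine le_antisymm ?_ ?_
  · refine csSup_le ⟨0, ∅, by simp, by simp, by simp⟩ ?_
    rintro n ⟨c, hc, -, rfl⟩
    have : c ⊆ {x} := by
      intro y hy
      have := hc hy
      simpa using this
    calc c.card ≤ ({x} : Finset P).card := Finset.card_le_card this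
      _ = 1 := by simp
  · have := le_pheight (S := ({x} : Set P)) (c := {x}) (by simp) (by simp [Set.subsingleton_singleton.isChain])
    simpa using this

lemma key (a : P) :
    pheight (Set.Iic a) + pheight (Set.Ici a) ≤ pheight (Set.univ : Set P) + 1 := by
  classical
  obtain ⟨c1, hc1s, hc1ch, hc1card⟩ := pheight_spec (Set.Iic a)
  obtain ⟨c2, hc2s, hc2ch, hc2card⟩ := pheight_spec (Set.Ici a)
  set d1 : Finset P := insert a c1 with hd1
  set d2 : Finset P := insert a c2 with hd2
  have hd1s : ↑d1 ⊆ Set.Iic a := by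
    rw [hd1, Finset.coe_insert]
    exact Set.insert_subset (le_refl a) hc1s
  have hd2s : ↑d2 ⊆ Set.Ici a := by
    rw [hd2, Finset.coe_insert]
    exact Set.insert_subset (le_refl a) hc2s
  have hd1ch : IsChain (· ≤ ·) (d1 : Set P) := by
    rw [hd1, Finset.coe_insert]
    exact hc1ch.insert (fun b hb _ => Or.inr (hc1s hb))
  have hd2ch : IsChain (· ≤ ·) (d2 : Set P) := by
    rw [hd2, Finset.coe_insert]
    exact hc2ch.insert (fun b hb _ => Or.inl (hc2s hb))
  have hunion_ch : IsChain (· ≤ ·) ((d1 ∪ d2 : Finset P) : Set P) := by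
    intro x hx y hy hxy
    simp only [Finset.coe_union, Set.mem_union] at hx hy
    rcases hx with hx | hx <;> rcases hy with hy | hy
    · exact hd1ch hx hy hxy
    · exact Or.inl (le_trans (hd1s hx) (hd2s hy))
    · exact Or.inr (le_trans (hd1s hy) (hd2s hx))
    · exact hd2ch hx hy hxy
  have hinter : d1 ∩ d2 = {a} := by
    apply Finset.Subset.antisymm
    · intro x hx
      simp only [Finset.mem_inter] at hx
      have h1 : x ≤ a := hd1s hx.1
      have h2 : a ≤ x := hd2s hx.2
      simp [le_antisymm h1 h2]
    · intro x hx
      simp only [Finset.mem_singleton] at hx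
      subst hx
      simp [hd1, hd2]
  have hcard : (d1 ∪ d2).card + 1 = d1.card + d2.card := by
    have := Finset.card_union_add_card_inter d1 d2
    rw [hinter] at this
    simpa using this
  have hle : (d1 ∪ d2).card ≤ pheight (Set.univ : Set P) :=
    le_pheight (by simp) hunion_ch
  have h1 : pheight (Set.Iic a) ≤ d1.card := by
    rw [← hc1card]; exact Finset.card_le_card (Finset.subset_insert a c1)
  have h2 : pheight (Set.Ici a) ≤ d2.card := by
    rw [← hc2card]; exact Finset.card_le_card (Finset.subset_insert a c2)
  omega

lemma two_le_pheight_Iic [OrderBot P] {a : P} (ha : a ≠ ⊥) : 2 ≤ pheight (Set.Iic a) := by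
  classical
  have h := le_pheight (S := Set.Iic a) (c := {⊥, a}) ?_ ?_
  · rwa [Finset.card_insert_of_notMem (by simpa using (Ne.symm ha)), Finset.card_singleton] at h
  · intro x hx
    simp only [Finset.coe_insert, Finset.coe_singleton, Set.mem_insert_iff,
      Set.mem_singleton_iff] at hx
    rcases hx with rfl | rfl
    · exact bot_le
    · exact le_rfl
  · intro x hx y hy hxy
    simp only [Finset.coe_insert, Finset.coe_singleton, Set.mem_insert_iff,
      Set.mem_singleton_iff] at hx hy
    rcases hx with rfl | rfl <;> rcases hy with rfl | rfl <;> simp_all [bot_le]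

lemma two_le_pheight_Ici [OrderTop P] {a : P} (ha : a ≠ ⊤) : 2 ≤ pheight (Set.Ici a) := by
  classical
  have h := le_pheight (S := Set.Ici a) (c := {a, ⊤}) ?_ ?_
  · rwa [Finset.card_insert_of_notMem (by simpa using ha), Finset.card_singleton] at h
  · intro x hx
    simp only [Finset.coe_insert, Finset.coe_singleton, Set.mem_insert_iff,
      Set.mem_singleton_iff] at hx
    rcases hx with rfl | rfl
    · exact le_rfl
    · exact le_top
  · intro x hx y hy hxy
    simp only [Finset.coe_insert, Finset.coe_singleton, Set.mem_insert_iff,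
      Set.mem_singleton_iff] at hx hy
    rcases hx with rfl | rfl <;> rcases hy with rfl | rfl <;> simp_all [le_top]

end aux

/-- 0 ≤ W(a) ≤ max(0, height(P) − 3). -/
theorem width_bounds {P : Type*} [Fintype P] [PartialOrder P]
    [BoundedOrder P] [Nontrivial P] (a : P) :
    0 ≤ ((pheight (Set.univ : Set P) : ℤ) - pheight (Set.Iic a)) -
        ((pheight (Set.Ici a) : ℤ) - 1) ∧
    ((pheight (Set.univ : Set P) : ℤ) - pheight (Set.Iic a)) -
        ((pheight (Set.Ici a) : ℤ) - 1) ≤ max 0 ((pheight (Set.univ : Set P) : ℤ) - 3) := by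
  have hkey := key a
  constructor
  · push_cast
    omega
  · by_cases hbot : a = ⊥
    · subst hbot
      rw [Set.Iic_bot, Set.Ici_bot, pheight_singleton]
      simp
    · by_cases htop : a = ⊤
      · subst htop
        rw [Set.Iic_top, Set.Ici_top, pheight_singleton]
        simp
      · have h1 := two_le_pheight_Iic hbot
        have h2 := two_le_pheight_Ici htop
        have : ((pheight (Set.univ : Set P) : ℤ) - pheight (Set.Iic a)) -
            ((pheight (Set.Ici a) : ℤ) - 1) ≤ (pheight (Set.univ : Set P) : ℤ) - 3 := by
          push_cast
          omega
        exact le_max_of_le_right this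
end
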